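/- For all real numbers a > 0, b, and 0 < β < 1, one has ||a+b|^β(a+b) − a^{β+1} − (1+β)a^β b| ≤ c(β)·min{|b|^{β+1}, a^{β−1}b²} for some constant c(β) depending only on β. -/

import Mathlib

/-!
Write `f t = |t| ^ β * t`, so that `f' t = (β + 1) * |t| ^ β` and the quantity to bound is the
first-order Taylor remainder `f (a + b) - f a - f' a * b`. By the mean value theorem it is at
most `|b|` times the oscillation of `f'` between `a` and `a + b`. The `β`-Hölder continuity of
`t ↦ t ^ β` bounds that oscillation by `(β + 1) * |b| ^ β` for every `b`. When `|b| ≤ a / 2` the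
segment stays in `[a / 2, ∞)`, where `t ↦ t ^ β` is Lipschitz with constant
`β * (a / 2) ^ (β - 1)`, which gives the bound `a ^ (β - 1) * b ^ 2` up to a constant. In each of
the two regimes `|b| ≤ a / 2` and `|b| > a / 2` the bound obtained is comparable to the minimum,
so `c = 2 * (β + 1)` works.
-/

open Real Set

theorem Convex.abs_image_sub_sub_deriv_mul_le {f f' : ℝ → ℝ} {s : Set ℝ}
    (hs : Convex ℝ s) {x y C : ℝ} (hf : ∀ z ∈ s, HasDerivAt f (f' z) z)
    (bound : ∀ z ∈ s, |f' z - f' x| ≤ C) (hx : x ∈ s) (hy : y ∈ s) :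
    |f y - f x - f' x * (y - x)| ≤ C * |y - x| := by
  have h := hs.norm_image_sub_le_of_norm_hasDerivWithin_le (f := fun z => f z - f' x * z)
    (fun z hz => ((hf z hz).sub ((hasDerivAt_id' z).const_mul (f' x))).hasDerivWithinAt)
    (by simpa using bound) hx hy
  rwa [show f y - f' x * y - (f x - f' x * x) = f y - f x - f' x * (y - x) by ring] at h

namespace Real

variable {β : ℝ}

theorem hasDerivAt_abs_rpow_mul_self (hβ : 0 < β) (t : ℝ) :
    HasDerivAt (fun x : ℝ => |x| ^ β * x) ((β + 1) * |t| ^ β) t := by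
  rcases eq_or_ne t 0 with rfl | ht
  · rw [hasDerivAt_iff_tendsto_slope]
    simp only [abs_zero, zero_rpow hβ.ne', mul_zero]
    have hcont : ContinuousAt (fun h : ℝ => |h| ^ β) 0 :=
      continuous_abs.continuousAt.rpow_const (Or.inr hβ.le)
    have hlim := hcont.tendsto.mono_left (nhdsWithin_le_nhds (s := {0}ᶜ))
    rw [abs_zero, zero_rpow hβ.ne'] at hlim
    refine hlim.congr' ?_
    filter_upwards [self_mem_nhdsWithin] with h hh
    rw [slope_def_field, mul_zero, sub_zero, sub_zero, mul_div_cancel_right₀ _ hh]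
  · have hderiv := ((hasDerivAt_abs ht).rpow_const (p := β) (Or.inl (abs_ne_zero.2 ht))).mul
      (hasDerivAt_id' t)
    refine hderiv.congr_deriv ?_
    have habs : |t| ^ (β - 1) * |t| = |t| ^ β := by
      rw [rpow_sub_one (abs_ne_zero.2 ht), div_mul_cancel₀ _ (abs_ne_zero.2 ht)]
    linear_combination β * |t| ^ (β - 1) * sign_mul_self t + β * habs

theorem abs_rpow_sub_rpow_le_abs_sub_rpow {x y : ℝ} (hx : 0 ≤ x) (hy : 0 ≤ y) (hβ0 : 0 ≤ β)
    (hβ1 : β ≤ 1) : |x ^ β - y ^ β| ≤ |x - y| ^ β := by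
  wlog hyx : y ≤ x generalizing x y
  · rw [abs_sub_comm, abs_sub_comm x]
    exact this hy hx (le_of_not_ge hyx)
  have h := rpow_add_le_add_rpow hy (sub_nonneg.2 hyx) hβ0 hβ1
  rw [add_sub_cancel] at h
  rw [abs_of_nonneg (sub_nonneg.2 (rpow_le_rpow hy hyx hβ0)), abs_of_nonneg (sub_nonneg.2 hyx)]
  linarith

theorem abs_rpow_sub_rpow_le_of_le {m x y : ℝ} (hm : 0 < m) (hx : m ≤ x) (hy : m ≤ y)
    (hβ0 : 0 ≤ β) (hβ1 : β ≤ 1) : |x ^ β - y ^ β| ≤ β * m ^ (β - 1) * |x - y| := by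
  refine (convex_Ici m).norm_image_sub_le_of_norm_hasDerivWithin_le (f := fun t => t ^ β)
    (fun t ht => (hasDerivAt_rpow_const (Or.inl (hm.trans_le ht).ne')).hasDerivWithinAt)
    (fun t ht => ?_) hy hx
  rw [norm_mul, norm_of_nonneg hβ0, norm_of_nonneg (rpow_nonneg (hm.le.trans ht) _)]
  exact mul_le_mul_of_nonneg_left (rpow_le_rpow_of_nonpos hm ht (by linarith)) hβ0

theorem rpow_sub_one_le_two_mul_two_mul_rpow_sub_one {x : ℝ} (hx : 0 ≤ x) (hβ : 0 ≤ β) :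
    x ^ (β - 1) ≤ 2 * (2 * x) ^ (β - 1) := by
  have h2 : 2 * (2 : ℝ) ^ (β - 1) = 2 ^ β := by
    rw [rpow_sub_one two_ne_zero]; ring
  rw [mul_rpow zero_le_two hx, ← mul_assoc, h2]
  exact le_mul_of_one_le_left (rpow_nonneg hx _) (one_le_rpow one_le_two hβ)

theorem abs_rpow_add_one_eq_rpow_sub_one_mul_sq {b : ℝ} (hb : b ≠ 0) :
    |b| ^ (β + 1) = |b| ^ (β - 1) * b ^ 2 := by
  rw [← sq_abs, ← rpow_two, ← rpow_add (abs_pos.2 hb)]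
  ring_nf

theorem rpow_sub_one_mul_sq_le_abs_rpow_add_one {a b : ℝ} (hβ : β ≤ 1) (hba : |b| ≤ a) :
    a ^ (β - 1) * b ^ 2 ≤ |b| ^ (β + 1) := by
  rcases eq_or_ne b 0 with rfl | hb
  · simp [rpow_nonneg]
  rw [abs_rpow_add_one_eq_rpow_sub_one_mul_sq hb]
  exact mul_le_mul_of_nonneg_right
    (rpow_le_rpow_of_nonpos (abs_pos.2 hb) hba (by linarith)) (sq_nonneg b)

theorem abs_rpow_add_one_le_two_mul_rpow_sub_one_mul_sq {a b : ℝ} (hβ0 : 0 ≤ β) (hβ1 : β ≤ 1)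
    (ha : 0 < a) (hab : a ≤ 2 * |b|) : |b| ^ (β + 1) ≤ 2 * (a ^ (β - 1) * b ^ 2) := by
  have hb : b ≠ 0 := abs_pos.1 (by linarith)
  rw [abs_rpow_add_one_eq_rpow_sub_one_mul_sq hb, ← mul_assoc]
  gcongr
  calc |b| ^ (β - 1) ≤ 2 * (2 * |b|) ^ (β - 1) :=
        rpow_sub_one_le_two_mul_two_mul_rpow_sub_one (abs_nonneg b) hβ0
    _ ≤ 2 * a ^ (β - 1) := by gcongr 2 * ?_; exact rpow_le_rpow_of_nonpos ha hab (by linarith)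

theorem abs_rpow_mul_sub_taylor_le_rpow (hβ0 : 0 < β) (hβ1 : β ≤ 1) (a b : ℝ) :
    |(|a + b|) ^ β * (a + b) - |a| ^ β * a - (β + 1) * |a| ^ β * b| ≤
      (β + 1) * |b| ^ (β + 1) := by
  have h := (convex_uIcc a (a + b)).abs_image_sub_sub_deriv_mul_le
    (fun z _ => hasDerivAt_abs_rpow_mul_self hβ0 z) (C := (β + 1) * |b| ^ β) (fun z hz => ?_)
    left_mem_uIcc right_mem_uIcc
  · rw [add_sub_cancel_left] at h
    rw [rpow_add_one' (abs_nonneg b) (by linarith)]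
    simpa only [mul_assoc] using h
  rw [← mul_sub, abs_mul, abs_of_pos (by linarith : 0 < β + 1)]
  gcongr
  calc |(|z|) ^ β - |a| ^ β| ≤ |(|z| - |a|)| ^ β :=
        abs_rpow_sub_rpow_le_abs_sub_rpow (abs_nonneg z) (abs_nonneg a) hβ0.le hβ1
    _ ≤ |b| ^ β := by
        refine rpow_le_rpow (abs_nonneg _) ?_ hβ0.le
        simpa using (abs_abs_sub_abs_le_abs_sub z a).trans (abs_sub_left_of_mem_uIcc hz)

theorem abs_rpow_mul_sub_taylor_le_sq (hβ0 : 0 < β) (hβ1 : β ≤ 1) {a b : ℝ} (ha : 0 < a)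
    (hb : |b| ≤ a / 2) :
    |(|a + b|) ^ β * (a + b) - |a| ^ β * a - (β + 1) * |a| ^ β * b| ≤
      2 * β * (β + 1) * (a ^ (β - 1) * b ^ 2) := by
  have h := (convex_uIcc a (a + b)).abs_image_sub_sub_deriv_mul_le
    (fun z _ => hasDerivAt_abs_rpow_mul_self hβ0 z)
    (C := (β + 1) * (β * (a / 2) ^ (β - 1) * |b|)) (fun z hz => ?_) left_mem_uIcc right_mem_uIcc
  · rw [add_sub_cancel_left] at h
    have hhalf : (a / 2) ^ (β - 1) ≤ 2 * a ^ (β - 1) := by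
      simpa [mul_div_cancel₀] using
        rpow_sub_one_le_two_mul_two_mul_rpow_sub_one (half_pos ha).le hβ0.le
    calc _ ≤ (β + 1) * (β * (a / 2) ^ (β - 1) * |b|) * |b| := h
      _ = β * (β + 1) * (a / 2) ^ (β - 1) * b ^ 2 := by rw [← sq_abs b]; ring
      _ ≤ β * (β + 1) * (2 * a ^ (β - 1)) * b ^ 2 := by gcongr
      _ = 2 * β * (β + 1) * (a ^ (β - 1) * b ^ 2) := by ring
  have hza : |z - a| ≤ |b| := by simpa using abs_sub_left_of_mem_uIcc hz
  have hz : a / 2 ≤ z := by linarith [neg_abs_le (z - a)]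
  rw [abs_of_pos ha, abs_of_pos (by linarith : 0 < z), ← mul_sub, abs_mul,
    abs_of_pos (by linarith : 0 < β + 1)]
  gcongr
  calc |z ^ β - a ^ β| ≤ β * (a / 2) ^ (β - 1) * |z - a| :=
        abs_rpow_sub_rpow_le_of_le (half_pos ha) hz (by linarith) hβ0.le hβ1
    _ ≤ β * (a / 2) ^ (β - 1) * |b| := by gcongr

end Real

theorem abs_rpow_mul_sub_taylor_le_of_lt_one (β : ℝ) (hβ0 : 0 < β) (hβ1 : β < 1) :
    ∃ c : ℝ, 0 < c ∧ ∀ a b : ℝ, 0 < a →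
      |(|a + b|) ^ β * (a + b) - a ^ (β + 1) - (1 + β) * a ^ β * b| ≤
        c * min (|b| ^ (β + 1)) (a ^ (β - 1) * b ^ 2) := by
  refine ⟨2 * (β + 1), by positivity, fun a b ha => ?_⟩
  have hR : (|a + b|) ^ β * (a + b) - a ^ (β + 1) - (1 + β) * a ^ β * b =
      |a + b| ^ β * (a + b) - |a| ^ β * a - (β + 1) * |a| ^ β * b := by
    rw [abs_of_pos ha, rpow_add_one ha.ne']
    ring
  rw [hR]
  rcases le_or_gt |b| (a / 2) with hb | hb
  · rw [min_eq_right (rpow_sub_one_mul_sq_le_abs_rpow_add_one hβ1.le (by linarith))]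
    calc _ ≤ 2 * β * (β + 1) * (a ^ (β - 1) * b ^ 2) :=
          abs_rpow_mul_sub_taylor_le_sq hβ0 hβ1.le ha hb
      _ ≤ 2 * (β + 1) * (a ^ (β - 1) * b ^ 2) := by gcongr; linarith
  · calc _ ≤ (β + 1) * |b| ^ (β + 1) := abs_rpow_mul_sub_taylor_le_rpow hβ0 hβ1.le a b
      _ ≤ (β + 1) * (2 * min (|b| ^ (β + 1)) (a ^ (β - 1) * b ^ 2)) := by
          rw [mul_min_of_nonneg _ _ zero_le_two]
          gcongr
          exact le_min (by linarith [rpow_nonneg (abs_nonneg b) (β + 1)])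
            (abs_rpow_add_one_le_two_mul_rpow_sub_one_mul_sq hβ0.le hβ1.le ha (by linarith))
      _ = _ := by ring
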